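/- arXiv:2604.13039 — 8 statements merged into one kernel-verified Lean document; each statement's English description precedes it below -/
import Mathlib

section
/- Let {K_i}_{i∈I} be a nonempty family of blocks of a bounded lattice L such that ⋃_{i∈I} K_i is a proper subset of L and there exists j∈I for which K_j is a complete block. Then ⋃_{i∈I} K_i is a complete block of L. -/
section Blocks

variable {L : Type*} [Lattice L] [BoundedOrder L]

/-- A *block of elements* of a bounded lattice `L`: a sublattice `K` with `K ≠ L`,
`K ∖ {⊥,⊤} ≠ ∅`, and `(↑k ∪ ↓k) ∖ {⊥,⊤} ⊆ K` for every `k ∈ K ∖ {⊥,⊤}`. -/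
def IsBlock (K : Set L) : Prop :=
  K ≠ Set.univ ∧
  (K \ ({⊥, ⊤} : Set L)).Nonempty ∧
  (∀ a ∈ K, ∀ b ∈ K, a ⊔ b ∈ K ∧ a ⊓ b ∈ K) ∧
  ∀ k ∈ K \ ({⊥, ⊤} : Set L), ∀ x : L, (k ≤ x ∨ x ≤ k) →
    x ∉ ({⊥, ⊤} : Set L) → x ∈ K

/-- A block is *complete* if it contains both `⊥` and `⊤`. -/
def IsCompleteBlock (K : Set L) : Prop :=
  IsBlock K ∧ ⊥ ∈ K ∧ ⊤ ∈ K

/-- A block is *minimal* if no block of `L` is strictly contained in it. -/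
def IsMinimalBlock (K : Set L) : Prop :=
  IsBlock K ∧ ∀ K' : Set L, IsBlock K' → ¬ K' ⊂ K

/-- Two blocks are *independent* if their intersection is contained in `{⊥,⊤}`. -/
def IndependentBlocks (K₁ K₂ : Set L) : Prop :=
  K₁ ∩ K₂ ⊆ ({⊥, ⊤} : Set L)

end Blocks

/-- If `{K i}` is a nonempty family of blocks of a bounded lattice `L`
(having at least three elements) whose union is a proper subset of `L`, and some member
of the family is a complete block, then the union is a complete block of `L`. -/
theorem union_of_blocks_with_complete_member_is_complete_block
    {L : Type*} [Lattice L] [BoundedOrder L]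
    (h3 : ∃ x y z : L, x ≠ y ∧ x ≠ z ∧ y ≠ z)
    {ι : Type*} [Nonempty ι] (K : ι → Set L)
    (hblocks : ∀ i, IsBlock (K i))
    (hproper : (⋃ i, K i) ≠ Set.univ)
    (hcomplete : ∃ j, IsCompleteBlock (K j)) :
    IsCompleteBlock (⋃ i, K i) := by
  obtain ⟨j, hjb, hjbot, hjtop⟩ := hcomplete
  have hbot : ⊥ ∈ ⋃ i, K i := Set.mem_iUnion.2 ⟨j, hjbot⟩
  have htop : ⊤ ∈ ⋃ i, K i := Set.mem_iUnion.2 ⟨j, hjtop⟩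
  refine ⟨⟨hproper, ?_, ?_, ?_⟩, hbot, htop⟩
  · obtain ⟨i⟩ := ‹Nonempty ι›
    obtain ⟨x, hx1, hx2⟩ := (hblocks i).2.1
    exact ⟨x, Set.mem_iUnion.2 ⟨i, hx1⟩, hx2⟩
  · intro a ha b hb
    rcases Set.mem_iUnion.1 ha with ⟨i, hai⟩
    rcases Set.mem_iUnion.1 hb with ⟨i', hbi⟩
    constructor
    · by_cases hab : a = ⊥
      · subst hab; simpa using Set.mem_iUnion.2 ⟨i', hbi⟩
      by_cases hat : a = ⊤
      · subst hat; simpa using htop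
      by_cases hst : a ⊔ b = ⊤
      · rw [hst]; exact htop
      have hsb : a ⊔ b ≠ ⊥ := fun h => hab (le_bot_iff.1 (h ▸ le_sup_left))
      exact Set.mem_iUnion.2 ⟨i, (hblocks i).2.2.2 a ⟨hai, by simp [hab, hat]⟩ (a ⊔ b)
        (Or.inl le_sup_left) (by simp [hsb, hst])⟩
    · by_cases hat : a = ⊤
      · subst hat; simpa using Set.mem_iUnion.2 ⟨i', hbi⟩
      by_cases hab : a = ⊥
      · subst hab; simpa using hbot
      by_cases hsb : a ⊓ b = ⊥
      · rw [hsb]; exact hbot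
      have hst : a ⊓ b ≠ ⊤ := fun h => hat (top_le_iff.1 (h ▸ inf_le_left))
      exact Set.mem_iUnion.2 ⟨i, (hblocks i).2.2.2 a ⟨hai, by simp [hab, hat]⟩ (a ⊓ b)
        (Or.inr inf_le_left) (by simp [hsb, hst])⟩
  · intro k hk x hx hxnt
    rcases Set.mem_iUnion.1 hk.1 with ⟨i, hki⟩
    exact Set.mem_iUnion.2 ⟨i, (hblocks i).2.2.2 k ⟨hki, hk.2⟩ x hx hxnt⟩
end

section
/- Given two blocks K1 and K2 of a bounded lattice L, either K1∩K2 is a block of L, or K1 and K2 are independent blocks of L (i.e., K1∩K2 ⊆ {⊥,⊤}). -/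
/-- Given two blocks `K₁` and `K₂` of a bounded lattice `L` (with at
least three elements), either `K₁ ∩ K₂` is a block of `L`, or `K₁` and `K₂` are
independent blocks of `L`. -/
theorem block_inter_block_or_independent
    {L : Type*} [Lattice L] [BoundedOrder L]
    (h3 : ∃ x y z : L, x ≠ y ∧ x ≠ z ∧ y ≠ z)
    (K₁ K₂ : Set L) (h₁ : IsBlock K₁) (h₂ : IsBlock K₂) :
    IsBlock (K₁ ∩ K₂) ∨ IndependentBlocks K₁ K₂ := by
  by_cases hI : IndependentBlocks K₁ K₂
  · exact Or.inr hI
  left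
  obtain ⟨k, hk, hknot⟩ : ∃ k, k ∈ K₁ ∩ K₂ ∧ k ∉ ({⊥, ⊤} : Set L) := by
    have := hI
    simp only [IndependentBlocks, Set.subset_def, not_forall] at this
    obtain ⟨k, hk1, hk2⟩ := this
    exact ⟨k, hk1, hk2⟩
  refine ⟨?_, ⟨k, hk, hknot⟩, ?_, ?_⟩
  · intro h
    apply h₁.1
    apply Set.eq_univ_of_forall
    intro x
    have : x ∈ K₁ ∩ K₂ := h ▸ Set.mem_univ x
    exact this.1
  · intro a ha b hb
    exact ⟨⟨(h₁.2.2.1 a ha.1 b hb.1).1, (h₂.2.2.1 a ha.2 b hb.2).1⟩,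
      ⟨(h₁.2.2.1 a ha.1 b hb.1).2, (h₂.2.2.1 a ha.2 b hb.2).2⟩⟩
  · intro m hm x hx hxnot
    exact ⟨h₁.2.2.2 m ⟨hm.1.1, hm.2⟩ x hx hxnot, h₂.2.2.2 m ⟨hm.1.2, hm.2⟩ x hx hxnot⟩
end

section
/- Every nonempty family of pairwise distinct minimal blocks of a bounded lattice L is a family of independent blocks; that is, any two distinct minimal blocks K1 and K2 of L satisfy K1∩K2 ⊆ {⊥,⊤}. -/
/-- Any two distinct minimal blocks `K₁`, `K₂` of a bounded lattice `L`
(with at least three elements) are independent, i.e. `K₁ ∩ K₂ ⊆ {⊥,⊤}`; hence every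
nonempty family of pairwise distinct minimal blocks is a family of independent blocks. -/
theorem distinct_minimal_blocks_independent
    {L : Type*} [Lattice L] [BoundedOrder L]
    (h3 : ∃ x y z : L, x ≠ y ∧ x ≠ z ∧ y ≠ z)
    (K₁ K₂ : Set L) (h₁ : IsMinimalBlock K₁) (h₂ : IsMinimalBlock K₂) (hne : K₁ ≠ K₂) :
    IndependentBlocks K₁ K₂ := by
  intro k hk
  by_contra hkb
  -- K₁ ∩ K₂ is a block
  have hblock : IsBlock (K₁ ∩ K₂) := by
    obtain ⟨⟨hne₁, hnonempty₁, hclosed₁, hconv₁⟩, hmin₁⟩ := h₁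
    obtain ⟨⟨hne₂, hnonempty₂, hclosed₂, hconv₂⟩, hmin₂⟩ := h₂
    refine ⟨?_, ⟨k, hk, hkb⟩, ?_, ?_⟩
    · intro h
      apply hne₁
      apply Set.eq_univ_of_univ_subset
      rw [← h]; exact Set.inter_subset_left
    · intro a ha b hb
      exact ⟨⟨(hclosed₁ a ha.1 b hb.1).1, (hclosed₂ a ha.2 b hb.2).1⟩,
        ⟨(hclosed₁ a ha.1 b hb.1).2, (hclosed₂ a ha.2 b hb.2).2⟩⟩
    · intro m hm x hx hxb
      exact ⟨hconv₁ m ⟨hm.1.1, hm.2⟩ x hx hxb, hconv₂ m ⟨hm.1.2, hm.2⟩ x hx hxb⟩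
  have e₁ : K₁ ∩ K₂ = K₁ := by
    by_contra h
    exact h₁.2 _ hblock ⟨Set.inter_subset_left, fun hs => h (le_antisymm Set.inter_subset_left hs)⟩
  have e₂ : K₁ ∩ K₂ = K₂ := by
    by_contra h
    exact h₂.2 _ hblock ⟨Set.inter_subset_right, fun hs => h (le_antisymm Set.inter_subset_right hs)⟩
  exact hne (e₁ ▸ e₂)
end

section
/- Let K be a block of a bounded lattice L such that L∖K is not contained in {⊥,⊤}. Then P = (L∖K) ∪ {⊥,⊤} is a complete block of L; moreover, K and P are independent blocks and K ∪ P = L, so L is decomposed into the independent blocks K and P. -/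
/-- Let `K` be a block of a bounded lattice `L` (with at least three
elements) such that `L ∖ K` is not contained in `{⊥,⊤}`. Then `P = (L ∖ K) ∪ {⊥,⊤}` is a
complete block of `L`; moreover `K` and `P` are independent and `K ∪ P = L`, so `L` is
decomposed into the independent blocks `K` and `P`. -/
theorem complement_block
    {L : Type*} [Lattice L] [BoundedOrder L]
    (h3 : ∃ x y z : L, x ≠ y ∧ x ≠ z ∧ y ≠ z)
    (K : Set L) (hK : IsBlock K)
    (h : ¬ (Set.univ \ K ⊆ ({⊥, ⊤} : Set L))) :
    IsCompleteBlock (Kᶜ ∪ ({⊥, ⊤} : Set L)) ∧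
    IndependentBlocks K (Kᶜ ∪ ({⊥, ⊤} : Set L)) ∧
    K ∪ (Kᶜ ∪ ({⊥, ⊤} : Set L)) = Set.univ := by
  obtain ⟨hKne, ⟨k0, hk0K, hk0nt⟩, hKcl, hKconv⟩ := hK
  obtain ⟨p0, hp0, hp0nt⟩ : ∃ x : L, x ∉ K ∧ x ∉ ({⊥, ⊤} : Set L) := by
    obtain ⟨x, hx1, hx2⟩ := Set.not_subset.mp h
    exact ⟨x, hx1.2, hx2⟩
  set P : Set L := Kᶜ ∪ ({⊥, ⊤} : Set L) with hP
  -- key convexity lemma between K and complement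
  have key : ∀ a ∈ P, ∀ c : L, c ∈ K → c ∉ ({⊥, ⊤} : Set L) →
      (c ≤ a ∨ a ≤ c) → a ∈ ({⊥, ⊤} : Set L) := by
    intro a ha c hcK hcnt hcomp
    by_contra hant
    have : a ∈ K := hKconv c ⟨hcK, hcnt⟩ a hcomp hant
    rcases ha with ha | ha
    · exact ha this
    · exact hant ha
  have hPblock : IsBlock P := by
    refine ⟨?_, ⟨p0, Or.inl hp0, hp0nt⟩, ?_, ?_⟩
    · intro hEq
      have : k0 ∈ P := hEq ▸ Set.mem_univ k0
      rcases this with h1 | h1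
      · exact h1 hk0K
      · exact hk0nt h1
    · intro a ha b hb
      constructor
      · by_cases hs : a ⊔ b ∈ ({⊥, ⊤} : Set L)
        · exact Or.inr hs
        · by_cases hsK : a ⊔ b ∈ K
          · have ha2 := key a ha (a ⊔ b) hsK hs (Or.inr le_sup_left)
            have hb2 := key b hb (a ⊔ b) hsK hs (Or.inr le_sup_right)
            exfalso
            apply hs
            rcases ha2 with rfl | rfl <;> rcases hb2 with rfl | rfl <;> simp
          · exact Or.inl hsK
      · by_cases hs : a ⊓ b ∈ ({⊥, ⊤} : Set L)
        · exact Or.inr hs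
        · by_cases hsK : a ⊓ b ∈ K
          · have ha2 := key a ha (a ⊓ b) hsK hs (Or.inl inf_le_left)
            have hb2 := key b hb (a ⊓ b) hsK hs (Or.inl inf_le_right)
            exfalso
            apply hs
            rcases ha2 with rfl | rfl <;> rcases hb2 with rfl | rfl <;> simp
          · exact Or.inl hsK
    · rintro k ⟨hkP, hknt⟩ x hcomp hxnt
      have hkK : k ∉ K := by
        rcases hkP with h1 | h1
        · exact h1
        · exact absurd h1 hknt
      left
      intro hxK
      exact hkK (hKconv x ⟨hxK, hxnt⟩ k (hcomp.symm) hknt)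
  refine ⟨⟨hPblock, Or.inr (Or.inl rfl), Or.inr (Or.inr rfl)⟩, ?_, ?_⟩
  · rintro x ⟨hxK, hxP⟩
    rcases hxP with h1 | h1
    · exact absurd hxK h1
    · exact h1
  · rw [← Set.union_assoc, Set.union_compl_self, Set.univ_union]
end

section
/- If a bounded lattice L has two independent blocks, then L can be decomposed into independent blocks; that is, there exists a family of pairwise independent blocks of L whose union is L. -/
universe u

section Aux

variable {L : Type u} [Lattice L] [BoundedOrder L]

/-- Comparability relation among nontrivial elements. -/
def myCompRel (a b : L) : Prop :=
  a ∉ ({⊥, ⊤} : Set L) ∧ b ∉ ({⊥, ⊤} : Set L) ∧ (a ≤ b ∨ b ≤ a)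

lemma myCompRel_symm {a b : L} (h : myCompRel a b) : myCompRel b a :=
  ⟨h.2.1, h.1, h.2.2.symm⟩

lemma my_rtg_symm {a b : L} (h : Relation.ReflTransGen myCompRel a b) :
    Relation.ReflTransGen myCompRel b a := by
  induction h with
  | refl => exact .refl
  | tail _ h2 ih => exact (Relation.ReflTransGen.single (myCompRel_symm h2)).trans ih

lemma my_rtg_nontrivial {a b : L} (ha : a ∉ ({⊥, ⊤} : Set L))
    (h : Relation.ReflTransGen myCompRel a b) : b ∉ ({⊥, ⊤} : Set L) := by
  induction h with
  | refl => exact ha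
  | tail _ h2 _ => exact h2.2.1

lemma my_block_closed {K : Set L} (hK : IsBlock K) {k b : L}
    (hk : k ∈ K \ ({⊥, ⊤} : Set L)) (h : Relation.ReflTransGen myCompRel k b) :
    b ∈ K \ ({⊥, ⊤} : Set L) := by
  induction h with
  | refl => exact hk
  | tail _ h2 ih => exact ⟨hK.2.2.2 _ ih _ h2.2.2 h2.2.1, h2.2.1⟩

/-- The comparability component of `x`. -/
def myCset (x : L) : Set L := {y | Relation.ReflTransGen myCompRel x y}

/-- The component together with `⊥` and `⊤`. -/
def myKset (x : L) : Set L := myCset x ∪ ({⊥, ⊤} : Set L)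

lemma myCset_eq_of_rtg {x y : L} (hxy : Relation.ReflTransGen myCompRel x y) :
    myCset x = myCset y := by
  ext w
  exact ⟨fun hw => (my_rtg_symm hxy).trans hw, fun hw => hxy.trans hw⟩

lemma myKset_isBlock {x : L} (hx : x ∉ ({⊥, ⊤} : Set L))
    (hex : ∃ y : L, y ∉ ({⊥, ⊤} : Set L) ∧ ¬ Relation.ReflTransGen myCompRel x y) :
    IsBlock (myKset x) := by
  obtain ⟨y, hy, hxy⟩ := hex
  refine ⟨?_, ⟨x, Or.inl Relation.ReflTransGen.refl, hx⟩, ?_, ?_⟩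
  · intro hu
    apply hxy
    have : y ∈ myKset x := hu ▸ Set.mem_univ y
    rcases this with h' | h'
    · exact h'
    · exact absurd h' hy
  · intro a ha b hb
    constructor
    · -- a ⊔ b ∈ myKset x
      rcases ha with ha | ha
      · rcases hb with hb | hb
        · by_cases hab : a ⊔ b ∈ ({⊥, ⊤} : Set L)
          · exact Or.inr hab
          · exact Or.inl (ha.tail ⟨my_rtg_nontrivial hx ha, hab, Or.inl le_sup_left⟩)
        · rcases hb with hb | hb
          · subst hb; rw [sup_bot_eq]; exact Or.inl ha
          · subst hb; exact Or.inr (Or.inr (by simp))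
      · rcases ha with ha | ha
        · subst ha; simpa using hb
        · subst ha; exact Or.inr (Or.inr (by simp))
    · -- a ⊓ b ∈ myKset x
      rcases ha with ha | ha
      · rcases hb with hb | hb
        · by_cases hab : a ⊓ b ∈ ({⊥, ⊤} : Set L)
          · exact Or.inr hab
          · exact Or.inl (ha.tail ⟨my_rtg_nontrivial hx ha, hab, Or.inr inf_le_left⟩)
        · rcases hb with hb | hb
          · subst hb; exact Or.inr (Or.inl (by simp))
          · subst hb; rw [inf_top_eq]; exact Or.inl ha
      · rcases ha with ha | ha
        · subst ha; exact Or.inr (Or.inl (by simp))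
        · subst ha; simpa using hb
  · rintro k ⟨hk, hk'⟩ z hz hz'
    rcases hk with hk | hk
    · exact Or.inl (hk.tail ⟨hk', hz', hz⟩)
    · exact absurd hk hk'

end Aux

/-- If a bounded lattice `L` (with at least three elements) has two
independent blocks, then `L` can be decomposed into independent blocks: there is a
nonempty family of pairwise independent blocks of `L` whose union is `L`. -/
theorem decomposition_into_independent_blocks_of_independent_pair
    {L : Type u} [Lattice L] [BoundedOrder L]
    (h3 : ∃ x y z : L, x ≠ y ∧ x ≠ z ∧ y ≠ z)
    (h : ∃ K₁ K₂ : Set L, IsBlock K₁ ∧ IsBlock K₂ ∧ IndependentBlocks K₁ K₂) :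
    ∃ (ι : Type u) (K : ι → Set L), Nonempty ι ∧
      (∀ i, IsBlock (K i)) ∧
      (∀ i j, i ≠ j → IndependentBlocks (K i) (K j)) ∧
      (⋃ i, K i) = Set.univ := by
  classical
  obtain ⟨K₁, K₂, hK₁, hK₂, hind⟩ := h
  obtain ⟨k₁, hk₁⟩ := hK₁.2.1
  obtain ⟨k₂, hk₂⟩ := hK₂.2.1
  -- key: every component misses some nontrivial element
  have key : ∀ x : L, x ∉ ({⊥, ⊤} : Set L) →
      ∃ y : L, y ∉ ({⊥, ⊤} : Set L) ∧ ¬ Relation.ReflTransGen myCompRel x y := by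
    intro x hx
    by_contra hcon
    push_neg at hcon
    have h1 : Relation.ReflTransGen myCompRel x k₁ := hcon k₁ hk₁.2
    have h2 : Relation.ReflTransGen myCompRel x k₂ := hcon k₂ hk₂.2
    have h12 : Relation.ReflTransGen myCompRel k₁ k₂ := (my_rtg_symm h1).trans h2
    have hk2K1 : k₂ ∈ K₁ \ ({⊥, ⊤} : Set L) := my_block_closed hK₁ hk₁ h12
    exact hk2K1.2 (hind ⟨hk2K1.1, hk₂.1⟩)
  refine ⟨{S : Set L // ∃ x : L, x ∉ ({⊥, ⊤} : Set L) ∧ S = myKset x},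
    Subtype.val, ⟨⟨myKset k₁, k₁, hk₁.2, rfl⟩⟩, ?_, ?_, ?_⟩
  · rintro ⟨S, x, hx, rfl⟩
    exact myKset_isBlock hx (key x hx)
  · rintro ⟨S, x, hx, rfl⟩ ⟨T, y, hy, rfl⟩ hne
    intro z hz
    by_contra hz'
    apply hne
    have hzx : z ∈ myCset x := hz.1.resolve_right hz'
    have hzy : z ∈ myCset y := hz.2.resolve_right hz'
    have : myCset x = myCset y := (myCset_eq_of_rtg hzx).trans (myCset_eq_of_rtg hzy).symm
    simp only [Subtype.mk_eq_mk, myKset, this]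
  · refine Set.eq_univ_of_forall fun z => ?_
    by_cases hz : z ∈ ({⊥, ⊤} : Set L)
    · exact Set.mem_iUnion.2 ⟨⟨myKset k₁, k₁, hk₁.2, rfl⟩, Or.inr hz⟩
    · exact Set.mem_iUnion.2 ⟨⟨myKset z, z, hz, rfl⟩, Or.inl Relation.ReflTransGen.refl⟩
end

section
/- For every a∈A, b∈B, x∈L and y∈L, the pairs ⟨φ_{b,y}↑↓, φ_{b,y}↑⟩ and ⟨φ_{a,x}↓, φ_{a,x}↓↑⟩ are concepts, and ⟨φ_{b,y}↑↓, φ_{b,y}↑⟩ ⪯ ⟨φ_{a,x}↓, φ_{a,x}↓↑⟩ holds in the concept lattice if and only if x &_{σ(a,b)} y ≤ R(a,b). -/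
/-- A multi-adjoint frame together with a formal context `(A, B, R, σ)`.
`conj i`, `limp i`, `rimp i` form an adjoint triple on the complete lattice `L` for each
index `i : I`, and each conjunctor satisfies the boundary condition
`x & ⊤ = ⊤ & x = x`. -/
structure FCAContext (L : Type*) [CompleteLattice L] (I A B : Type*) where
  conj : I → L → L → L
  limp : I → L → L → L
  rimp : I → L → L → L
  R : A → B → L
  sig : A → B → I
  adjoint_left : ∀ i x y z, x ≤ limp i z y ↔ conj i x y ≤ z
  adjoint_right : ∀ i x y z, conj i x y ≤ z ↔ y ≤ rimp i z x
  boundary_left : ∀ i x, conj i ⊤ x = x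
  boundary_right : ∀ i x, conj i x ⊤ = x

namespace FCAContext

variable {L I A B : Type*} [CompleteLattice L]

open Classical in
/-- The fuzzy-attribute `φ_{a,x}`. -/
noncomputable def phiA (a : A) (x : L) : A → L :=
  fun a' => if a' = a then x else ⊥

open Classical in
/-- The fuzzy-object `φ_{b,y}`. -/
noncomputable def phiB (b : B) (y : L) : B → L :=
  fun b' => if b' = b then y else ⊥

/-- The pair `⟨g_⊤, f_⊥⟩` (the top of the concept lattice of a normalized context). -/
def topC : (B → L) × (A → L) := (fun _ => (⊤ : L), fun _ => (⊥ : L))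

/-- The pair `⟨g_⊥, f_⊤⟩` (the bottom of the concept lattice of a normalized context). -/
def botC : (B → L) × (A → L) := (fun _ => (⊥ : L), fun _ => (⊤ : L))

/-- The order on concepts: `⟨g₁,f₁⟩ ⪯ ⟨g₂,f₂⟩ iff g₁ ≤ g₂` pointwise. -/
def cle (c d : (B → L) × (A → L)) : Prop := c.1 ≤ d.1

variable (C : FCAContext L I A B)

/-- The derivation operator `↑` on fuzzy sets of objects:
`g↑(a) = ⨅_b R(a,b) ↙^{σ(a,b)} g(b)`. -/
def up (g : B → L) : A → L := fun a => ⨅ b, C.limp (C.sig a b) (C.R a b) (g b)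

/-- The derivation operator `↓` on fuzzy sets of attributes:
`f↓(b) = ⨅_a R(a,b) ↖_{σ(a,b)} f(a)`. -/
def down (f : A → L) : B → L := fun b => ⨅ a, C.rimp (C.sig a b) (C.R a b) (f a)

/-- The concept lattice `M`: pairs `⟨g, f⟩` with `g↑ = f` and `f↓ = g`. -/
def concepts : Set ((B → L) × (A → L)) :=
  {c | C.up c.1 = c.2 ∧ C.down c.2 = c.1}

/-- The pair `⟨φ_{a,x}↓, φ_{a,x}↓↑⟩` generated by a fuzzy-attribute. -/
noncomputable def attrConcept (a : A) (x : L) : (B → L) × (A → L) :=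
  (C.down (phiA a x), C.up (C.down (phiA a x)))

/-- The pair `⟨φ_{b,y}↑↓, φ_{b,y}↑⟩` generated by a fuzzy-object. -/
noncomputable def objConcept (b : B) (y : L) : (B → L) × (A → L) :=
  (C.down (C.up (phiB b y)), C.up (phiB b y))

/-- A context is *normalized* when every attribute is related to some object with a
non-bottom value and to some object with the bottom value, and symmetrically for
objects. -/
def Normalized : Prop :=
  (∀ a : A, ∃ b : B, C.R a b ≠ ⊥) ∧ (∀ a : A, ∃ b : B, C.R a b = ⊥) ∧
  (∀ b : B, ∃ a : A, C.R a b ≠ ⊥) ∧ (∀ b : B, ∃ a : A, C.R a b = ⊥)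

/-- The conjunctor associated with the index `i` has no zero-divisors. -/
def NoZeroDiv (i : I) : Prop :=
  ∀ x y : L, x ≠ ⊥ → y ≠ ⊥ → C.conj i x y ≠ ⊥

/-- `(Y, X)` is a *separable subcontext* of the context. -/
def SeparableSubcontext (Y : Set A) (X : Set B) : Prop :=
  Y.Nonempty ∧ X.Nonempty ∧ Y ≠ Set.univ ∧ X ≠ Set.univ ∧
  (∃ a ∈ Y, ∃ b ∈ X, C.R a b ≠ ⊥) ∧
  (∀ a ∈ Y, ∀ b ∉ X, C.R a b = ⊥) ∧
  (∀ a ∉ Y, ∀ b ∈ X, C.R a b = ⊥)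

/-- A family `{(Afam l, Bfam l)}_{l : Λ}` is a *decomposition into independent
subcontexts* of the context. -/
def SubcontextDecomposition {Λ : Type*} (Afam : Λ → Set A) (Bfam : Λ → Set B) : Prop :=
  Nonempty Λ ∧
  (∀ l, C.SeparableSubcontext (Afam l) (Bfam l)) ∧
  (∀ l m, l ≠ m → Disjoint (Afam l) (Afam m)) ∧
  (∀ l m, l ≠ m → Disjoint (Bfam l) (Bfam m)) ∧
  (⋃ l, Afam l) = Set.univ ∧ (⋃ l, Bfam l) = Set.univ ∧
  (∀ l, ∀ a ∉ Afam l, ∀ b ∈ Bfam l, C.NoZeroDiv (C.sig a b)) ∧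
  (∀ l, ∀ a ∈ Afam l, ∀ b ∉ Bfam l, C.NoZeroDiv (C.sig a b))

/-- The meet of two concepts in the concept lattice: the extent is the pointwise
infimum of the extents. -/
def cmeet (c d : (B → L) × (A → L)) : (B → L) × (A → L) :=
  (c.1 ⊓ d.1, C.up (c.1 ⊓ d.1))

/-- The join of two concepts in the concept lattice: the intent is the pointwise
infimum of the intents. -/
def cjoin (c d : (B → L) × (A → L)) : (B → L) × (A → L) :=
  (C.down (c.2 ⊓ d.2), c.2 ⊓ d.2)

/-- A concept is *meet-irreducible* in the concept lattice `M` if it is not the top of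
`M` (its extent is not `g_⊤`) and whenever it is the meet of two concepts it equals one
of them. -/
def MeetIrred (m : (B → L) × (A → L)) : Prop :=
  m ∈ C.concepts ∧ m.1 ≠ (fun _ => (⊤ : L)) ∧
  ∀ c d, c ∈ C.concepts → d ∈ C.concepts → m.1 = c.1 ⊓ d.1 → m = c ∨ m = d

/-- `M_F^{A'}`: the meet-irreducible concepts generated by fuzzy-attributes with
attribute in `A'`. -/
noncomputable def MF (A' : Set A) : Set ((B → L) × (A → L)) :=
  {m | C.MeetIrred m ∧ ∃ a ∈ A', ∃ x : L, m = C.attrConcept a x}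

/-- `M_g^{A'}`: the elements of `M_F^{A'}` above the concept with extent `g`. -/
noncomputable def Mg (g : B → L) (A' : Set A) : Set ((B → L) × (A → L)) :=
  {m ∈ C.MF A' | g ≤ m.1}

/-- The concept lattice satisfies the ascending chain condition. -/
def ACC : Prop :=
  ∀ c : ℕ → (B → L) × (A → L), (∀ n, c n ∈ C.concepts) →
    (∀ n, cle (c n) (c (n + 1))) → ∃ n, ∀ m, n ≤ m → c m = c n

/-- `K` is a *block of concepts* of the concept lattice `M`: a sublattice of `M`,
different from `M`, containing some concept other than the top `⟨g_⊤,f_⊥⟩` and the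
bottom `⟨g_⊥,f_⊤⟩`, and closed under comparability except for the top and the bottom. -/
def IsBlockM (K : Set ((B → L) × (A → L))) : Prop :=
  K ⊆ C.concepts ∧ K ≠ C.concepts ∧
  (K \ ({topC, botC} : Set ((B → L) × (A → L)))).Nonempty ∧
  (∀ c ∈ K, ∀ d ∈ K, C.cmeet c d ∈ K ∧ C.cjoin c d ∈ K) ∧
  ∀ k ∈ K \ ({topC, botC} : Set ((B → L) × (A → L))), ∀ c ∈ C.concepts,
    (cle k c ∨ cle c k) →
    c ∉ ({topC, botC} : Set ((B → L) × (A → L))) → c ∈ K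

/-- A complete block of concepts: a block containing the top and the bottom of `M`. -/
def IsCompleteBlockM (K : Set ((B → L) × (A → L))) : Prop :=
  C.IsBlockM K ∧ topC ∈ K ∧ botC ∈ K

/-- A family `{K l}_{l : Λ}` is a *decomposition into independent blocks* of the
concept lattice `M`. -/
def BlockDecomposition {Λ : Type*} (K : Λ → Set ((B → L) × (A → L))) : Prop :=
  Nonempty Λ ∧ (∀ l, C.IsBlockM (K l)) ∧
  (∀ l m, l ≠ m → K l ∩ K m ⊆ ({topC, botC} : Set ((B → L) × (A → L)))) ∧
  (⋃ l, K l) = C.concepts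

/-- The block of concepts `K_λ` determined by a set of attributes `A'`:
the concepts which are the infimum of `M_g^{A'}`, together with the top and the
bottom of `M`. -/
noncomputable def Kblock (A' : Set A) : Set ((B → L) × (A → L)) :=
  {c ∈ C.concepts | c.1 = ⨅ m ∈ C.Mg c.1 A', m.1} ∪
    ({topC, botC} : Set ((B → L) × (A → L)))

/-- The set of attributes `A_μ` associated with a block of concepts `K`. -/
noncomputable def Amu (K : Set ((B → L) × (A → L))) : Set A :=
  {a | ∃ x : L, C.attrConcept a x ∈
    K \ ({topC, botC} : Set ((B → L) × (A → L)))}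

/-- The set of objects `B_μ` associated with a block of concepts `K`. -/
noncomputable def Bmu (K : Set ((B → L) × (A → L))) : Set B :=
  {b | ∃ y : L, C.objConcept b y ∈
    K \ ({topC, botC} : Set ((B → L) × (A → L)))}

end FCAContext

namespace FCAContext

variable {L I A B : Type*} [CompleteLattice L] (C : FCAContext L I A B)

lemma gc (f : A → L) (g : B → L) : f ≤ C.up g ↔ g ≤ C.down f := by
  constructor
  · intro h b
    refine le_iInf fun a => ?_
    rw [← C.adjoint_right, ← C.adjoint_left]
    exact (h a).trans (iInf_le _ b)
  · intro h a
    refine le_iInf fun b => ?_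
    rw [C.adjoint_left, C.adjoint_right]
    exact (h b).trans (iInf_le _ a)

lemma up_antitone {g g' : B → L} (h : g ≤ g') : C.up g' ≤ C.up g :=
  (C.gc _ _).mpr (h.trans ((C.gc _ _).mp le_rfl))

lemma down_antitone {f f' : A → L} (h : f ≤ f') : C.down f' ≤ C.down f :=
  (C.gc _ _).mp (h.trans ((C.gc _ _).mpr le_rfl))

lemma le_updown (f : A → L) : f ≤ C.up (C.down f) := (C.gc _ _).mpr le_rfl

lemma le_downup (g : B → L) : g ≤ C.down (C.up g) := (C.gc _ _).mp le_rfl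

lemma up_downup (g : B → L) : C.up (C.down (C.up g)) = C.up g :=
  le_antisymm (C.up_antitone (C.le_downup g)) (C.le_updown (C.up g))

lemma down_updown (f : A → L) : C.down (C.up (C.down f)) = C.down f :=
  le_antisymm (C.down_antitone (C.le_updown f)) (C.le_downup (C.down f))

lemma conj_bot (i : I) (x : L) : C.conj i x ⊥ = ⊥ :=
  le_bot_iff.mp ((C.adjoint_right i x ⊥ ⊥).mpr bot_le)

end FCAContext

/-- For every attribute `a`, object `b`, and `x y : L`, the pairs
`⟨φ_{b,y}↑↓, φ_{b,y}↑⟩` and `⟨φ_{a,x}↓, φ_{a,x}↓↑⟩` are concepts, and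
`⟨φ_{b,y}↑↓, φ_{b,y}↑⟩ ⪯ ⟨φ_{a,x}↓, φ_{a,x}↓↑⟩` holds in the concept lattice if and
only if `x &_{σ(a,b)} y ≤ R(a,b)`. -/
theorem FCAContext.objConcept_le_attrConcept_iff
    {L I A B : Type*} [CompleteLattice L] [Finite I] [Nonempty I]
    [Nonempty A] [Nonempty B] (C : FCAContext L I A B) :
    ∀ (a : A) (b : B) (x y : L),
      C.objConcept b y ∈ C.concepts ∧
      C.attrConcept a x ∈ C.concepts ∧
      (FCAContext.cle (C.objConcept b y) (C.attrConcept a x) ↔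
        C.conj (C.sig a b) x y ≤ C.R a b) := by
  intro a b x y
  refine ⟨⟨C.up_downup _, rfl⟩, ⟨rfl, C.down_updown _⟩, ?_⟩
  have key : phiA a x ≤ C.up (phiB b y) ↔ C.conj (C.sig a b) x y ≤ C.R a b := by
    constructor
    · intro h
      rw [← C.adjoint_left]
      have := (h a).trans (iInf_le _ b)
      simpa [phiA, phiB] using this
    · intro h a'
      classical
      by_cases ha : a' = a
      · subst ha
        refine le_iInf fun b' => ?_
        by_cases hb : b' = b
        · subst hb
          simpa [phiA, phiB] using (C.adjoint_left _ _ _ _).mpr h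
        · simp only [phiA, phiB, if_pos rfl, if_neg hb]
          rw [C.adjoint_left, C.conj_bot]
          exact bot_le
      · simp [phiA, if_neg ha]
  constructor
  · intro h
    refine key.mp ?_
    calc phiA a x ≤ C.up (C.down (phiA a x)) := C.le_updown _
      _ ≤ C.up (C.down (C.up (phiB b y))) := C.up_antitone h
      _ = C.up (phiB b y) := C.up_downup _
  · intro h
    exact C.down_antitone (key.mpr h)
end

section
/- Let (A,B,R,σ) be a normalized context. Then ⟨g_⊤, f_⊥⟩ and ⟨g_⊥, f_⊤⟩ are concepts (that is, f_⊥↓ = g_⊤, g_⊤↑ = f_⊥, g_⊥↑ = f_⊤ and f_⊤↓ = g_⊥), and for all a∈A, b∈B and x,y∈L∖{⊥}, the concepts ⟨φ_{a,x}↓, φ_{a,x}↓↑⟩ and ⟨φ_{b,y}↑↓, φ_{b,y}↑⟩ are distinct from both ⟨g_⊤, f_⊥⟩ and ⟨g_⊥, f_⊤⟩. -/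
namespace FCAContext

variable {L I A B : Type*} [CompleteLattice L] (C : FCAContext L I A B)

lemma rimp_bot' (i : I) (z : L) : C.rimp i z ⊥ = ⊤ := by
  refine le_antisymm le_top ?_
  rw [← C.adjoint_right]
  have h : C.conj i ⊥ ⊤ = ⊥ := C.boundary_right i ⊥
  simp [h]

lemma limp_bot' (i : I) (z : L) : C.limp i z ⊥ = ⊤ := by
  refine le_antisymm le_top ?_
  rw [C.adjoint_left]
  have : C.conj i ⊤ ⊥ ≤ z := by
    rw [C.adjoint_right]; exact bot_le
  exact this

lemma limp_top' (i : I) (z : L) : C.limp i z ⊤ = z := by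
  refine le_antisymm ?_ ?_
  · have := (C.adjoint_left i (C.limp i z ⊤) ⊤ z).mp le_rfl
    rwa [C.boundary_right] at this
  · rw [C.adjoint_left, C.boundary_right]

lemma rimp_top' (i : I) (z : L) : C.rimp i z ⊤ = z := by
  refine le_antisymm ?_ ?_
  · have := (C.adjoint_right i ⊤ (C.rimp i z ⊤) z).mpr le_rfl
    rwa [C.boundary_left] at this
  · rw [← C.adjoint_right, C.boundary_left]

lemma eq_bot_of_rimp_bot_eq_top (i : I) (x : L) (h : C.rimp i ⊥ x = ⊤) : x = ⊥ := by
  have : C.conj i x ⊤ ≤ ⊥ := by rw [C.adjoint_right, h]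
  rw [C.boundary_right] at this
  exact le_bot_iff.mp this

lemma eq_bot_of_limp_bot_eq_top (i : I) (y : L) (h : C.limp i ⊥ y = ⊤) : y = ⊥ := by
  have : C.conj i ⊤ y ≤ ⊥ := by rw [← C.adjoint_left, h]
  rw [C.boundary_left] at this
  exact le_bot_iff.mp this

lemma le_rimp_self (i : I) (z x : L) : z ≤ C.rimp i z x := by
  rw [← C.adjoint_right, ← C.adjoint_left]
  have : (⊤ : L) ≤ C.limp i z z := by
    rw [C.adjoint_left, C.boundary_left]
      
  exact le_trans le_top this

lemma le_limp_self (i : I) (z y : L) : z ≤ C.limp i z y := by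
  rw [C.adjoint_left, C.adjoint_right]
  have : (⊤ : L) ≤ C.rimp i z z := by
    rw [← C.adjoint_right, C.boundary_right]
  exact le_trans le_top this

end FCAContext

/-- In a normalized context, `⟨g_⊤, f_⊥⟩` and `⟨g_⊥, f_⊤⟩` are
concepts (`f_⊥↓ = g_⊤`, `g_⊤↑ = f_⊥`, `g_⊥↑ = f_⊤`, `f_⊤↓ = g_⊥`), and for all `a ∈ A`,
`b ∈ B` and `x, y ∈ L ∖ {⊥}`, the concepts `⟨φ_{a,x}↓, φ_{a,x}↓↑⟩` and
`⟨φ_{b,y}↑↓, φ_{b,y}↑⟩` are distinct from both `⟨g_⊤, f_⊥⟩` and `⟨g_⊥, f_⊤⟩`. -/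
theorem FCAContext.top_bot_concepts_and_generated_concepts_nontrivial
    {L I A B : Type*} [CompleteLattice L] [Finite I] [Nonempty I]
    [Nonempty A] [Nonempty B] (C : FCAContext L I A B)
    (hn : C.Normalized) :
    C.down (fun _ => (⊥ : L)) = (fun _ => (⊤ : L)) ∧
    C.up (fun _ => (⊤ : L)) = (fun _ => (⊥ : L)) ∧
    C.up (fun _ => (⊥ : L)) = (fun _ => (⊤ : L)) ∧
    C.down (fun _ => (⊤ : L)) = (fun _ => (⊥ : L)) ∧
    (∀ (a : A) (x : L), x ≠ ⊥ →
      C.attrConcept a x ≠ FCAContext.topC ∧ C.attrConcept a x ≠ FCAContext.botC) ∧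
    (∀ (b : B) (y : L), y ≠ ⊥ →
      C.objConcept b y ≠ FCAContext.topC ∧ C.objConcept b y ≠ FCAContext.botC) := by
  obtain ⟨hA1, hA2, hB1, hB2⟩ := hn
  refine ⟨?_, ?_, ?_, ?_, ?_, ?_⟩
  · funext b
    simp [down, C.rimp_bot']
  · funext a
    obtain ⟨b, hb⟩ := hA2 a
    refine le_antisymm ?_ bot_le
    calc C.up (fun _ => (⊤ : L)) a ≤ C.limp (C.sig a b) (C.R a b) ⊤ := iInf_le _ b
    _ = ⊥ := by rw [C.limp_top', hb]
  · funext a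
    simp [up, C.limp_bot']
  · funext b
    obtain ⟨a, ha⟩ := hB2 b
    refine le_antisymm ?_ bot_le
    calc C.down (fun _ => (⊤ : L)) b ≤ C.rimp (C.sig a b) (C.R a b) ⊤ := iInf_le _ a
    _ = ⊥ := by rw [C.rimp_top', ha]
  · intro a x hx
    constructor
    · intro h
      obtain ⟨b, hb⟩ := hA2 a
      have h1 : C.down (phiA a x) b = ⊤ := congrFun (congrArg Prod.fst h) b
      have h2 : C.rimp (C.sig a b) (C.R a b) (phiA a x a) = ⊤ :=
        le_antisymm le_top (h1 ▸ iInf_le _ a)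
      rw [hb] at h2
      simp only [phiA, if_pos rfl] at h2
      exact hx (C.eq_bot_of_rimp_bot_eq_top _ _ h2)
    · intro h
      obtain ⟨b, hb⟩ := hA1 a
      have h1 : C.down (phiA a x) b = ⊥ := congrFun (congrArg Prod.fst h) b
      have h2 : C.R a b ≤ C.down (phiA a x) b := by
        refine le_iInf fun a' => ?_
        by_cases ha' : a' = a
        · subst ha'
          simp only [phiA, if_pos rfl]
          exact C.le_rimp_self _ _ _
        · simp [phiA, ha', C.rimp_bot']
      rw [h1] at h2
      exact hb (le_bot_iff.mp h2)
  · intro b y hy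
    constructor
    · intro h
      obtain ⟨a, ha⟩ := hB1 b
      have h1 : C.up (phiB b y) a = ⊥ := congrFun (congrArg Prod.snd h) a
      have h2 : C.R a b ≤ C.up (phiB b y) a := by
        refine le_iInf fun b' => ?_
        by_cases hb' : b' = b
        · subst hb'
          simp only [phiB, if_pos rfl]
          exact C.le_limp_self _ _ _
        · simp [phiB, hb', C.limp_bot']
      rw [h1] at h2
      exact ha (le_bot_iff.mp h2)
    · intro h
      obtain ⟨a, ha⟩ := hB2 b
      have h1 : C.up (phiB b y) a = ⊤ := congrFun (congrArg Prod.snd h) a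
      have h2 : C.limp (C.sig a b) (C.R a b) (phiB b y b) = ⊤ :=
        le_antisymm le_top (h1 ▸ iInf_le _ b)
      rw [ha] at h2
      simp only [phiB, if_pos rfl] at h2
      exact hy (C.eq_bot_of_limp_bot_eq_top _ _ h2)
end

section
/- Let (A,B,R,σ) be a normalized context with a decomposition into independent subcontexts {(A_λ,B_λ)}_{λ∈Λ}. Then for every λ∈Λ, every attribute a∈A_λ and every x∈L∖{⊥}, the extent of the fuzzy-attribute φ_{a,x} satisfies: φ_{a,x}↓(b) = R(a,b) ↖_{σ(a,b)} x if b∈B_λ, and φ_{a,x}↓(b) = ⊥ otherwise, for all b∈B. -/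
/-- Let `(A,B,R,σ)` be a normalized context with a decomposition into
independent subcontexts `{(Afam l, Bfam l)}`. Then for every `l`, every attribute
`a ∈ Afam l` and every `x ∈ L ∖ {⊥}`, the extent of the fuzzy-attribute `φ_{a,x}`
satisfies `φ_{a,x}↓(b) = R(a,b) ↖_{σ(a,b)} x` if `b ∈ Bfam l`, and `φ_{a,x}↓(b) = ⊥`
otherwise. -/
theorem FCAContext.extent_of_fuzzy_attribute_in_decomposition
    {L I A B : Type*} [CompleteLattice L] [Finite I] [Nonempty I]
    [Nonempty A] [Nonempty B] (C : FCAContext L I A B)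
    (hn : C.Normalized)
    {Λ : Type*} (Afam : Λ → Set A) (Bfam : Λ → Set B)
    (hdec : C.SubcontextDecomposition Afam Bfam) :
    ∀ l, ∀ a ∈ Afam l, ∀ x : L, x ≠ ⊥ → ∀ b : B,
      (b ∈ Bfam l → C.down (FCAContext.phiA a x) b = C.rimp (C.sig a b) (C.R a b) x) ∧
      (b ∉ Bfam l → C.down (FCAContext.phiA a x) b = ⊥) := by
  intro l a ha x hx b
  have hrtop : ∀ i z, C.rimp i z ⊥ = (⊤ : L) := by
    intro i z
    refine top_le_iff.mp ?_
    rw [← C.adjoint_right, C.boundary_right]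
    exact bot_le
  have hdown : C.down (FCAContext.phiA a x) b = C.rimp (C.sig a b) (C.R a b) x := by
    apply le_antisymm
    · refine le_trans (iInf_le _ a) ?_
      simp [FCAContext.phiA]
    · refine le_iInf fun a' => ?_
      by_cases h : a' = a
      · subst h; simp [FCAContext.phiA]
      · simp [FCAContext.phiA, h, hrtop]
  refine ⟨fun _ => hdown, fun hb => ?_⟩
  rw [hdown]
  have hRbot : C.R a b = ⊥ := (hdec.2.1 l).2.2.2.2.2.1 a ha b hb
  have hnzd : C.NoZeroDiv (C.sig a b) := hdec.2.2.2.2.2.2.2 l a ha b hb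
  by_contra hne
  apply hnzd x (C.rimp (C.sig a b) (C.R a b) x) hx hne
  rw [← le_bot_iff, ← hRbot]
  exact (C.adjoint_right _ _ _ _).mpr le_rfl
end
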